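/- The function g(b) = log₂((1 + (a·c(b) + p)/(e·c(b) + q)) / (1 + (a + p)/(e + q)))⁻¹ considered as the rate degradation ζ(b) = log₂(1 + (a + p)/(e + q)) − log₂(1 + (a·c(b) + p)/(e·c(b) + q)) with c(b) = cos²(π/2^b), is nonnegative and monotonically non-increasing in b ≥ 1, and tends to 0 as b → ∞, whenever a, p, e, q > 0 and (a·y + p)/(e·y + q) is increasing in y (i.e., a·q − p·e > 0). -/

import Mathlib

/-!
The achievable rate `log₂ (1 + (a y + p) / (e y + q))` is a monotone, continuous function of the
effective channel gain `y ≥ 0`, because the fractional-linear map `y ↦ (a y + p) / (e y + q)` has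
derivative of the sign of `a q - p e`. Quantizing phases to `b` bits scales that gain by
`cos² (π / 2 ^ b)`, which lies in `[0, 1]`, increases with `b ≥ 1` and tends to `1`; the rate
degradation is therefore nonnegative, non-increasing and vanishes in the limit.
-/

open Real Filter Set Topology

section Rate

variable {a p e q : ℝ}

theorem monotoneOn_div_affine (he : 0 ≤ e) (hq : 0 < q) (hpe : p * e ≤ a * q) :
    MonotoneOn (fun y => (a * y + p) / (e * y + q)) (Ici 0) := by
  intro y₁ (hy₁ : 0 ≤ y₁) y₂ (hy₂ : 0 ≤ y₂) hy
  have hd₁ : 0 < e * y₁ + q := by positivity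
  have hd₂ : 0 < e * y₂ + q := by positivity
  rw [div_le_div_iff₀ hd₁ hd₂]
  nlinarith [mul_nonneg (sub_nonneg.2 hpe) (sub_nonneg.2 hy)]

noncomputable def rate (a p e q y : ℝ) : ℝ := logb 2 (1 + (a * y + p) / (e * y + q))

theorem rate_one : rate a p e q 1 = logb 2 (1 + (a + p) / (e + q)) := by
  simp only [rate, mul_one]

theorem monotoneOn_rate (hp : 0 ≤ p) (he : 0 ≤ e) (hq : 0 < q) (hpe : p * e ≤ a * q) :
    MonotoneOn (rate a p e q) (Ici 0) := by
  intro y₁ (hy₁ : 0 ≤ y₁) y₂ hy₂ hy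
  have ha : 0 ≤ a := by nlinarith
  have hd₁ : 0 < e * y₁ + q := by positivity
  refine logb_le_logb_of_le one_lt_two (by positivity) ?_
  exact (add_le_add_iff_left 1).2 (monotoneOn_div_affine he hq hpe hy₁ hy₂ hy)

theorem continuousAt_rate {y : ℝ} (hden : e * y + q ≠ 0)
    (harg : 1 + (a * y + p) / (e * y + q) ≠ 0) : ContinuousAt (rate a p e q) y := by
  unfold rate
  fun_prop (disch := assumption)

end Rate

section QuantizationGain

noncomputable def quantizationGain (b : ℕ) : ℝ := cos (π / 2 ^ b) ^ 2

theorem quantizationGain_nonneg (b : ℕ) : 0 ≤ quantizationGain b := sq_nonneg _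

theorem quantizationGain_le_one (b : ℕ) : quantizationGain b ≤ 1 := by
  rw [quantizationGain, sq_le_one_iff_abs_le_one]
  exact abs_cos_le_one _

theorem antitone_pi_div_two_pow : Antitone fun b : ℕ => π / 2 ^ b :=
  fun _ _ h => div_le_div_of_nonneg_left pi_pos.le (by positivity) (pow_le_pow_right₀ one_le_two h)

theorem cos_pi_div_two_pow_nonneg {b : ℕ} (hb : 1 ≤ b) : 0 ≤ cos (π / 2 ^ b) := by
  have hangle : π / 2 ^ b ≤ π / 2 ^ 1 := antitone_pi_div_two_pow hb
  rw [pow_one] at hangle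
  have hpos : 0 < π / 2 ^ b := by positivity
  exact cos_nonneg_of_neg_pi_div_two_le_of_le (by linarith [pi_div_two_pos]) hangle

theorem monotone_cos_pi_div_two_pow : Monotone fun b : ℕ => cos (π / 2 ^ b) := by
  intro b₁ b₂ hb
  have hangle : π / 2 ^ b₁ ≤ π / 2 ^ 0 := antitone_pi_div_two_pow (Nat.zero_le b₁)
  rw [pow_zero, div_one] at hangle
  exact cos_le_cos_of_nonneg_of_le_pi (by positivity) hangle (antitone_pi_div_two_pow hb)

theorem monotoneOn_quantizationGain : MonotoneOn quantizationGain (Ici 1) := by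
  intro b₁ (hb₁ : 1 ≤ b₁) b₂ _ hb
  exact pow_le_pow_left₀ (cos_pi_div_two_pow_nonneg hb₁) (monotone_cos_pi_div_two_pow hb) 2

theorem tendsto_quantizationGain : Tendsto quantizationGain atTop (𝓝 1) := by
  have hangle : Tendsto (fun b : ℕ => π / 2 ^ b) atTop (𝓝 0) := by
    simpa [div_eq_mul_inv] using
      (tendsto_pow_atTop_atTop_of_one_lt one_lt_two).inv_tendsto_atTop.const_mul π
  have hcos := ((continuous_cos.tendsto 0).comp hangle).pow 2
  rwa [cos_zero, one_pow] at hcos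

end QuantizationGain

theorem stmt_11_general (a p e q : ℝ) (hp : 0 < p) (he : 0 < e) (hq : 0 < q)
    (hmono : a * q - p * e > 0) :
    (∀ b : ℕ, 1 ≤ b →
      0 ≤ Real.logb 2 (1 + (a + p) / (e + q))
        - Real.logb 2 (1 + (a * (Real.cos (Real.pi / 2 ^ b))^2 + p)
            / (e * (Real.cos (Real.pi / 2 ^ b))^2 + q))) ∧
    (∀ b₁ b₂ : ℕ, 1 ≤ b₁ → b₁ ≤ b₂ →
      Real.logb 2 (1 + (a + p) / (e + q))
        - Real.logb 2 (1 + (a * (Real.cos (Real.pi / 2 ^ b₂))^2 + p)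
            / (e * (Real.cos (Real.pi / 2 ^ b₂))^2 + q))
      ≤ Real.logb 2 (1 + (a + p) / (e + q))
        - Real.logb 2 (1 + (a * (Real.cos (Real.pi / 2 ^ b₁))^2 + p)
            / (e * (Real.cos (Real.pi / 2 ^ b₁))^2 + q))) ∧
    Filter.Tendsto (fun b : ℕ =>
      Real.logb 2 (1 + (a + p) / (e + q))
        - Real.logb 2 (1 + (a * (Real.cos (Real.pi / 2 ^ b))^2 + p)
            / (e * (Real.cos (Real.pi / 2 ^ b))^2 + q)))
      Filter.atTop (nhds 0) := by
  have hζ (b : ℕ) : logb 2 (1 + (a + p) / (e + q))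
      - logb 2 (1 + (a * cos (π / 2 ^ b) ^ 2 + p) / (e * cos (π / 2 ^ b) ^ 2 + q))
      = rate a p e q 1 - rate a p e q (quantizationGain b) := by
    rw [rate_one]; rfl
  simp only [hζ]
  have hrate := monotoneOn_rate hp.le he.le hq (sub_pos.1 hmono).le
  refine ⟨fun b _ => ?_, fun b₁ b₂ hb₁ hb => ?_, ?_⟩
  · exact sub_nonneg.2 (hrate (quantizationGain_nonneg b) (mem_Ici.2 zero_le_one)
      (quantizationGain_le_one b))
  · exact sub_le_sub_left (hrate (quantizationGain_nonneg b₁) (quantizationGain_nonneg b₂)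
      (monotoneOn_quantizationGain hb₁ (hb₁.trans hb) hb)) _
  · have ha : 0 < a := by nlinarith
    have hcont : ContinuousAt (rate a p e q) 1 := continuousAt_rate (by positivity) (by positivity)
    simpa using (tendsto_const_nhds (x := rate a p e q 1)).sub
      (hcont.tendsto.comp tendsto_quantizationGain)

/-- the rate degradation ζ(b) due to b-bit quantization is nonnegative,
non-increasing in b ≥ 1, and tends to 0 as b → ∞. -/
theorem stmt_11 (a p e q : ℝ) (ha : 0 < a) (hp : 0 < p) (he : 0 < e) (hq : 0 < q)
    (hmono : a * q - p * e > 0) :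
    (∀ b : ℕ, 1 ≤ b →
      0 ≤ Real.logb 2 (1 + (a + p) / (e + q))
        - Real.logb 2 (1 + (a * (Real.cos (Real.pi / 2 ^ b))^2 + p)
            / (e * (Real.cos (Real.pi / 2 ^ b))^2 + q))) ∧
    (∀ b₁ b₂ : ℕ, 1 ≤ b₁ → b₁ ≤ b₂ →
      Real.logb 2 (1 + (a + p) / (e + q))
        - Real.logb 2 (1 + (a * (Real.cos (Real.pi / 2 ^ b₂))^2 + p)
            / (e * (Real.cos (Real.pi / 2 ^ b₂))^2 + q))
      ≤ Real.logb 2 (1 + (a + p) / (e + q))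
        - Real.logb 2 (1 + (a * (Real.cos (Real.pi / 2 ^ b₁))^2 + p)
            / (e * (Real.cos (Real.pi / 2 ^ b₁))^2 + q))) ∧
    Filter.Tendsto (fun b : ℕ =>
      Real.logb 2 (1 + (a + p) / (e + q))
        - Real.logb 2 (1 + (a * (Real.cos (Real.pi / 2 ^ b))^2 + p)
            / (e * (Real.cos (Real.pi / 2 ^ b))^2 + q)))
      Filter.atTop (nhds 0) :=
  stmt_11_general a p e q hp he hq hmono
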